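/- For integers n ≥ m ≥ 0, S(n,m) = \sum_{k=0}^{n-m} (-1)^k \binom{n-1+k}{n-m+k} \binom{2n-m}{n-m-k} s(n-m+k, k), where s denotes signed Stirling numbers of the first kind and S denotes Stirling numbers of the second kind. -/

import Mathlib

/-- Signed Stirling numbers of the first kind. -/
def s1 : ℕ → ℕ → ℤ
  | 0, 0 => 1
  | 0, _ + 1 => 0
  | _ + 1, 0 => 0
  | n + 1, m + 1 => s1 n m - n * s1 n (m + 1)

/-- Stirling numbers of the second kind. -/
def s2 : ℕ → ℕ → ℤ
  | 0, 0 => 1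
  | 0, _ + 1 => 0
  | _ + 1, 0 => 0
  | n + 1, m + 1 => (m + 1) * s2 n (m + 1) + s2 n m

/-!
For fixed `d`, the map `n ↦ s(n, n - d)` is a polynomial in `n` of degree `2d`, and its
continuation to negative arguments is `-t ↦ (-1)^d S(d + t, t)`: both pieces satisfy the
difference equation `g_{d+1}(x + 1) - g_{d+1}(x) = -x g_d(x)`, which raises the degree by two.
Polynomiality is expressed through the vanishing of the `(2d + 1)`-st forward difference.
Interpolating at the nodes `0, …, 2d`, where the values are `0` below `d` and `s(d + j, j)` at
`d + j`, and evaluating the Lagrange form at `-t` gives the formula.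
-/

open Finset fwdDiff
open scoped Nat

def FwdDiffDegreeLE {G : Type*} [AddCommGroup G] (N : ℕ) (f : ℤ → G) : Prop :=
  (Δ_[1])^[N + 1] f = 0

lemma Int.eq_apply_zero_of_fwdDiff_eq_zero {G : Type*} [AddCommGroup G] {f : ℤ → G}
    (hf : Δ_[1] f = 0) (x : ℤ) : f x = f 0 := by
  have step (y : ℤ) : f (y + 1) = f y := sub_eq_zero.1 (congrFun hf y)
  induction x using Int.induction_on with
  | zero => rfl
  | succ y ih => rw [step, ih]
  | pred y ih => rw [← ih, ← step, sub_add_cancel]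

lemma fwdDiff_intCast_sub_mul {R : Type*} [CommRing R] (c : R) (f : ℤ → R) :
    Δ_[1] (fun x : ℤ ↦ ((x : R) - c) * f x)
      = fun x : ℤ ↦ ((x : R) - (c - 1)) * Δ_[1] f x + f x := by
  funext x
  simp only [fwdDiff, Int.cast_add, Int.cast_one]
  ring

namespace FwdDiffDegreeLE

section AddCommGroup

variable {G : Type*} [AddCommGroup G] {N : ℕ} {f g : ℤ → G}

lemma succ_iff : FwdDiffDegreeLE (N + 1) f ↔ FwdDiffDegreeLE N (Δ_[1] f) := Iff.rfl

lemma const (c : G) : FwdDiffDegreeLE 0 (fun _ ↦ c) := fwdDiff_const 1 c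

lemma add (hf : FwdDiffDegreeLE N f) (hg : FwdDiffDegreeLE N g) : FwdDiffDegreeLE N (f + g) := by
  rw [FwdDiffDegreeLE, fwdDiff_iter_add, hf, hg, add_zero]

lemma sub (hf : FwdDiffDegreeLE N f) (hg : FwdDiffDegreeLE N g) : FwdDiffDegreeLE N (f - g) := by
  rw [FwdDiffDegreeLE, ← fwdDiff_aux.coe_fwdDiffₗ_pow] at hf hg ⊢
  rw [map_sub, hf, hg, sub_zero]

lemma const_smul {R : Type*} [Monoid R] [DistribMulAction R G] (r : R)
    (hf : FwdDiffDegreeLE N f) : FwdDiffDegreeLE N (r • f) := by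
  rw [FwdDiffDegreeLE, fwdDiff_iter_const_smul, hf, smul_zero]

lemma sum {ι : Type*} {s : Finset ι} {F : ι → ℤ → G}
    (hF : ∀ i ∈ s, FwdDiffDegreeLE N (F i)) : FwdDiffDegreeLE N (∑ i ∈ s, F i) := by
  rw [FwdDiffDegreeLE, fwdDiff_iter_finsetSum]
  exact sum_eq_zero hF

theorem eq_zero_of_eval_eq_zero : ∀ {N : ℕ} {f : ℤ → G},
    FwdDiffDegreeLE N f → (∀ i ≤ N, f i = 0) → f = 0
  | N, f, hf, hzero => by
    have hΔ : Δ_[1] f = 0 := by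
      cases N with
      | zero => exact hf
      | succ N =>
        refine eq_zero_of_eval_eq_zero (succ_iff.1 hf) fun i hi ↦ ?_
        rw [fwdDiff, hzero i (by omega), ← Nat.cast_succ, hzero (i + 1) (by omega), sub_zero]
    funext x
    rw [Int.eq_apply_zero_of_fwdDiff_eq_zero hΔ x, ← Nat.cast_zero, hzero 0 (Nat.zero_le N)]
    rfl

end AddCommGroup

section CommRing

variable {R : Type*} [CommRing R]

lemma X_sub_C_mul : ∀ {N : ℕ} (c : R) {f : ℤ → R}, FwdDiffDegreeLE N f →
    FwdDiffDegreeLE (N + 1) (fun x : ℤ ↦ ((x : R) - c) * f x)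
  | 0, c, f, hf => by
    rw [succ_iff, fwdDiff_intCast_sub_mul]
    simpa only [show Δ_[1] f = 0 from hf, Pi.zero_apply, mul_zero, zero_add] using hf
  | N + 1, c, f, hf => by
    rw [succ_iff, fwdDiff_intCast_sub_mul]
    exact (X_sub_C_mul (c - 1) (succ_iff.1 hf)).add hf

lemma prod_X_sub_C {ι : Type*} (s : Finset ι) (a : ι → R) :
    FwdDiffDegreeLE #s (fun x : ℤ ↦ ∏ i ∈ s, ((x : R) - a i)) := by
  induction s using Finset.cons_induction with
  | empty => simpa using const (1 : R)
  | cons i s _ ih => simpa only [card_cons, prod_cons] using ih.X_sub_C_mul (a i)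

end CommRing

end FwdDiffDegreeLE

lemma prod_range_erase {M : Type*} [CommMonoid M] (f : ℕ → M) (k r : ℕ) :
    ∏ i ∈ (range (k + 1 + r)).erase k, f i
      = (∏ i ∈ range k, f i) * ∏ i ∈ range r, f (k + 1 + i) := by
  have hupd : ∏ i ∈ (range (k + 1 + r)).erase k, f i
      = ∏ i ∈ range (k + 1 + r), Function.update f k 1 i := by
    rw [← prod_erase _ (Function.update_self k 1 f)]
    exact prod_congr rfl fun i hi ↦ (Function.update_of_ne (ne_of_mem_erase hi) _ _).symm
  rw [hupd, prod_range_add, prod_range_succ, Function.update_self, mul_one]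
  congr 1
  · exact prod_congr rfl fun i hi ↦ Function.update_of_ne (by simp at hi; omega) _ _
  · exact prod_congr rfl fun i _ ↦ Function.update_of_ne (by omega) _ _

lemma prod_range_neg_natCast_sub {R : Type*} [CommRing R] (a : ℕ) : ∀ k : ℕ,
    ∏ i ∈ range k, (-(a : R) - i) = (-1) ^ k * a.ascFactorial k
  | 0 => by simp
  | k + 1 => by
    rw [prod_range_succ, prod_range_neg_natCast_sub a k, Nat.ascFactorial_succ]
    push_cast
    ring

section Lagrange

variable (K : Type*) [Field K] [CharZero K]

def lagrangeBasis (N k : ℕ) (x : ℤ) : K :=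
  ∏ i ∈ (range (N + 1)).erase k, ((x : K) - i) / ((k : K) - i)

variable {K}

lemma lagrangeBasis_degreeLE {N k : ℕ} (hk : k ≤ N) :
    FwdDiffDegreeLE N (lagrangeBasis K N k) := by
  have hcard : #((range (N + 1)).erase k) = N := by
    rw [card_erase_of_mem (mem_range.2 (by omega)), card_range, Nat.add_sub_cancel]
  have h := (FwdDiffDegreeLE.prod_X_sub_C ((range (N + 1)).erase k) (fun i : ℕ ↦ (i : K)))
    |>.const_smul (∏ i ∈ (range (N + 1)).erase k, ((k : K) - i))⁻¹
  rw [hcard] at h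
  convert h using 1
  funext x
  simp only [lagrangeBasis, prod_div_distrib, Pi.smul_apply, smul_eq_mul]
  ring

lemma lagrangeBasis_natCast {N k i : ℕ} (hi : i ≤ N) :
    lagrangeBasis K N k i = if i = k then 1 else 0 := by
  split_ifs with hik
  · subst hik
    refine prod_eq_one fun j hj ↦ ?_
    rw [Int.cast_natCast]
    exact div_self (sub_ne_zero.2 (by exact_mod_cast (ne_of_mem_erase hj).symm))
  · refine prod_eq_zero (i := i) (mem_erase.2 ⟨hik, mem_range.2 (by omega)⟩) ?_
    rw [Int.cast_natCast, sub_self, zero_div]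

theorem FwdDiffDegreeLE.eq_sum_lagrangeBasis {N : ℕ} {f : ℤ → K} (hf : FwdDiffDegreeLE N f) :
    f = ∑ k ∈ range (N + 1), f k • lagrangeBasis K N k := by
  refine sub_eq_zero.1 (hf.sub (FwdDiffDegreeLE.sum fun k hk ↦ ?_) |>.eq_zero_of_eval_eq_zero
    fun i hi ↦ ?_)
  · exact (lagrangeBasis_degreeLE (Nat.lt_succ_iff.1 (mem_range.1 hk))).const_smul _
  · simp [Finset.sum_apply, lagrangeBasis_natCast hi, Nat.lt_succ_iff.2 hi]

lemma lagrangeBasis_neg_natCast {d j : ℕ} (hj : j ≤ d) (t : ℕ) :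
    lagrangeBasis K (2 * d) (d + j) (-t)
      = (-1) ^ (d + j) * (t + (d + j) - 1).choose (d + j) * (2 * d + t).choose (d - j) := by
  obtain ⟨e, rfl⟩ := Nat.exists_eq_add_of_le hj
  set k := j + e + j
  have hnum : ∏ i ∈ range e, (((-t : ℤ) : K) - ((k + 1 + i : ℕ) : K))
      = ∏ i ∈ range e, (-((t + k + 1 : ℕ) : K) - i) :=
    prod_congr rfl fun i _ ↦ by push_cast; ring
  have hden : ∏ i ∈ range e, ((k : K) - ((k + 1 + i : ℕ) : K))
      = ∏ i ∈ range e, (-((1 : ℕ) : K) - i) :=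
    prod_congr rfl fun i _ ↦ by push_cast; ring
  rw [lagrangeBasis, prod_div_distrib, show 2 * (j + e) + 1 = k + 1 + e by omega,
    prod_range_erase, prod_range_erase, hnum, hden, Int.cast_neg, Int.cast_natCast,
    prod_range_neg_natCast_sub, prod_range_neg_natCast_sub, Finset.prod_range_natCast_sub,
    ← Nat.descFactorial_eq_prod_range, Nat.descFactorial_self,
    prod_range_neg_natCast_sub, Nat.one_ascFactorial, Nat.ascFactorial_eq_factorial_mul_choose',
    Nat.ascFactorial_eq_factorial_mul_choose', Nat.add_sub_cancel_left,
    show t + k + 1 + e - 1 = 2 * (j + e) + t by omega]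
  have hk : (k ! : K) ≠ 0 := Nat.cast_ne_zero.2 (Nat.factorial_ne_zero _)
  have he : (e ! : K) ≠ 0 := Nat.cast_ne_zero.2 (Nat.factorial_ne_zero _)
  field_simp
  push_cast
  ring

end Lagrange

lemma s1_eq_zero_of_lt : ∀ {n m : ℕ}, n < m → s1 n m = 0
  | 0, _ + 1, _ => rfl
  | n + 1, m + 1, h => by
    rw [s1, s1_eq_zero_of_lt (by omega : n < m), s1_eq_zero_of_lt (by omega : n < m + 1)]
    ring

lemma s1_self : ∀ n, s1 n n = 1
  | 0 => rfl
  | n + 1 => by rw [s1, s1_self n, s1_eq_zero_of_lt (Nat.lt_succ_self n), mul_zero, sub_zero]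

lemma s2_eq_zero_of_lt : ∀ {n m : ℕ}, n < m → s2 n m = 0
  | 0, _ + 1, _ => rfl
  | n + 1, m + 1, h => by
    rw [s2, s2_eq_zero_of_lt (by omega : n < m), s2_eq_zero_of_lt (by omega : n < m + 1)]
    ring

lemma s2_self : ∀ n, s2 n n = 1
  | 0 => rfl
  | n + 1 => by rw [s2, s2_self n, s2_eq_zero_of_lt (Nat.lt_succ_self n), mul_zero, zero_add]

def stirlingFun (d : ℕ) : ℤ → ℚ
  | .ofNat n => if d ≤ n then s1 n (n - d) else 0
  | .negSucc t => (-1) ^ d * s2 (d + t + 1) (t + 1)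

lemma stirlingFun_natCast (d n : ℕ) :
    stirlingFun d n = if d ≤ n then (s1 n (n - d) : ℚ) else 0 := rfl

lemma stirlingFun_neg_natCast (d t : ℕ) :
    stirlingFun d (-t) = (-1) ^ d * (s2 (d + t) t : ℚ) := by
  cases t with
  | zero =>
    rw [Nat.cast_zero, neg_zero, ← Nat.cast_zero, stirlingFun_natCast]
    cases d with
    | zero => simp [s1_self, s2_self]
    | succ d => simp [s2]
  | succ t => rfl

lemma stirlingFun_zero : stirlingFun 0 = fun _ ↦ 1 := by
  funext x
  cases x with
  | ofNat n => simp [stirlingFun, s1_self]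
  | negSucc t => simp [stirlingFun, s2_self]

lemma fwdDiff_stirlingFun_succ (d : ℕ) :
    Δ_[1] (stirlingFun (d + 1)) = fun x ↦ -(x * stirlingFun d x) := by
  funext x
  rw [fwdDiff]
  obtain ⟨n, rfl⟩ | ⟨t, rfl⟩ : (∃ n : ℕ, x = n) ∨ ∃ t : ℕ, x = -(t + 1 : ℕ) := by
    rcases x with n | t
    exacts [.inl ⟨n, rfl⟩, .inr ⟨t, rfl⟩]
  · rw [← Nat.cast_succ, stirlingFun_natCast, stirlingFun_natCast, stirlingFun_natCast,
      Int.cast_natCast]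
    rcases lt_trichotomy n d with hn | rfl | hn
    · simp [show ¬d + 1 ≤ n + 1 by omega, show ¬d + 1 ≤ n by omega, show ¬d ≤ n by omega]
    · cases n <;> simp [s1]
    · obtain ⟨u, rfl⟩ := Nat.exists_eq_add_of_lt hn
      simp only [show d + 1 ≤ d + u + 1 + 1 by omega, show d + 1 ≤ d + u + 1 by omega,
        show d ≤ d + u + 1 by omega, if_true, show d + u + 1 + 1 - (d + 1) = u + 1 by omega,
        show d + u + 1 - (d + 1) = u by omega, show d + u + 1 - d = u + 1 by omega]
      rw [s1]
      push_cast
      ring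
  · rw [show -((t + 1 : ℕ) : ℤ) + 1 = -(t : ℤ) by push_cast; ring, stirlingFun_neg_natCast,
      stirlingFun_neg_natCast, stirlingFun_neg_natCast,
      show d + 1 + (t + 1) = d + 1 + t + 1 by ring, show d + (t + 1) = d + 1 + t by ring, s2]
    push_cast
    ring

lemma stirlingFun_degreeLE : ∀ d, FwdDiffDegreeLE (2 * d) (stirlingFun d)
  | 0 => stirlingFun_zero ▸ FwdDiffDegreeLE.const 1
  | d + 1 => by
    rw [show 2 * (d + 1) = 2 * d + 1 + 1 by ring, FwdDiffDegreeLE.succ_iff,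
      fwdDiff_stirlingFun_succ]
    simpa using ((stirlingFun_degreeLE d).const_smul (-1 : ℚ)).X_sub_C_mul 0

theorem s2_add_eq_sum (d t : ℕ) :
    (s2 (d + t) t : ℚ) = ∑ j ∈ range (d + 1), (-1) ^ j * (t + (d + j) - 1).choose (d + j)
      * (2 * d + t).choose (d - j) * (s1 (d + j) j : ℚ) := by
  have hinterp := congrFun (stirlingFun_degreeLE d).eq_sum_lagrangeBasis (-t)
  have hlow : ∀ i ∈ range d, stirlingFun d i * lagrangeBasis ℚ (2 * d) i (-t) = 0 :=
    fun i hi ↦ by rw [stirlingFun_natCast, if_neg (by simpa using hi), zero_mul]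
  simp only [Finset.sum_apply, Pi.smul_apply, smul_eq_mul] at hinterp
  rw [stirlingFun_neg_natCast, show 2 * d + 1 = d + (d + 1) by ring, sum_range_add,
    sum_eq_zero hlow, zero_add] at hinterp
  have hsign : ((-1 : ℚ) ^ d) ^ 2 = 1 := by rw [← pow_mul, mul_comm, pow_mul]; norm_num
  calc (s2 (d + t) t : ℚ) = (-1) ^ d * ((-1) ^ d * s2 (d + t) t) := by
        linear_combination -(s2 (d + t) t : ℚ) * hsign
    _ = _ := by
      rw [hinterp, mul_sum]
      refine sum_congr rfl fun j hj ↦ ?_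
      rw [stirlingFun_natCast, if_pos (by omega), Nat.add_sub_cancel_left,
        lagrangeBasis_neg_natCast (by simpa [Nat.lt_succ_iff] using hj)]
      linear_combination ((-1) ^ j * (t + (d + j) - 1).choose (d + j)
        * (2 * d + t).choose (d - j) * (s1 (d + j) j : ℚ)) * hsign

theorem stmt13 (n m : ℕ) (h : m ≤ n) :
    s2 n m = ∑ k ∈ Finset.range (n - m + 1),
      (-1 : ℤ) ^ k * (n - 1 + k).choose (n - m + k) * (2 * n - m).choose (n - m - k)
        * s1 (n - m + k) k := by
  obtain ⟨d, rfl⟩ := Nat.exists_eq_add_of_le h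
  have hsum := s2_add_eq_sum d m
  rw [Nat.add_sub_cancel_left, add_comm m d]
  refine Int.cast_injective (α := ℚ) (hsum.trans ?_)
  push_cast
  refine sum_congr rfl fun k hk_mem ↦ ?_
  have hk : k ≤ d := Nat.lt_succ_iff.1 (mem_range.1 hk_mem)
  -- `d + m - 1` truncates at `d + m = 0`, but then `k = 0`
  rw [show d + m - 1 + k = m + (d + k) - 1 by omega, show 2 * (d + m) - m = 2 * d + m by omega]
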